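/- arXiv:2210.14505 — 8 statements merged into one kernel-verified Lean document; each statement's English description precedes it below -/
import Mathlib

section
/- Let q be a prime power, a | (q+1), t = (q^2-1)/a, and b an integer with a+b odd and b ≤ a-3. For integers i,j with 0 ≤ i,j ≤ ((a+b+1)/2)·((q+1)/a) − 2 and (i,j) ≠ (0,0), one has t | (qi+j) if and only if qi+j = υt for some integer υ with (a−b+1)/2 ≤ υ ≤ (a+b−1)/2. -/
/-!
Write `q + 1 = a * c`, so that `t = c * (q - 1)`, and put `m = (a + b + 1) / 2`. If
`q * i + j = υ * t`, then `q * (υ * c - i) = j + υ * c > 0`, so `υ * c - i ≥ 1` and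
`j + υ * c ≥ q = a * c - 1`; with `j ≤ m * c - 2` this forces `υ > a - m`. On the other hand
`q * i + j ≤ (q + 1) * (m * c - 2) < m * c * (q - 1)` because `m < a`, so `υ < m`.
-/

theorem lt_of_mul_add_eq_mul_mul_sub_one {R : Type*} [CommRing R] [LinearOrder R]
    [IsStrictOrderedRing R] {q a c m i j υ : R} (hq : 1 ≤ q) (hc : 0 < c) (hma : m < a)
    (hqac : q + 1 = a * c) (hi : i + 2 ≤ m * c) (hj : j + 2 ≤ m * c)
    (heq : q * i + j = υ * (c * (q - 1))) : υ < m := by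
  by_contra! hmυ
  have hqi : q * (i + 2) ≤ q * (m * c) := mul_le_mul_of_nonneg_left hi (by linarith)
  have hυm : m * (c * (q - 1)) ≤ υ * (c * (q - 1)) :=
    mul_le_mul_of_nonneg_right hmυ (mul_nonneg hc.le (by linarith))
  have : a * c ≤ m * c := by nlinarith
  exact hma.not_ge (le_of_mul_le_mul_right this hc)

theorem Int.lt_add_of_mul_add_eq_mul_mul_sub_one {q a c m i j υ : ℤ} (hq : 0 ≤ q) (hc : 0 < c)
    (hυ : 0 < υ) (hj0 : 0 ≤ j) (hqac : q + 1 = a * c) (hj : j + 2 ≤ m * c)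
    (heq : q * i + j = υ * (c * (q - 1))) : a < m + υ := by
  have hk : q * (υ * c - i) = j + υ * c := by linear_combination -heq
  have hk1 : 1 ≤ υ * c - i :=
    pos_of_mul_pos_right (hk ▸ by positivity : 0 < q * (υ * c - i)) hq
  have : (a - m - υ) * c < 0 := by nlinarith
  linarith [neg_of_mul_neg_left this hc.le]

theorem Nat.sq_sub_one_div_eq {q a c : ℕ} (ha : 0 < a) (hqac : q + 1 = a * c) :
    (q ^ 2 - 1) / a = c * (q - 1) := by
  rw [← one_pow 2, Nat.sq_sub_sq, hqac, one_pow, mul_assoc, Nat.mul_div_cancel_left _ ha]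

theorem stmt2_general (q a b t : ℕ) (ha : a ∣ q + 1)
    (ht : t = (q ^ 2 - 1) / a) (hb : b + 3 ≤ a) :
    ∀ i j : ℕ, i ≤ ((a + b + 1) / 2) * ((q + 1) / a) - 2 →
      j ≤ ((a + b + 1) / 2) * ((q + 1) / a) - 2 → ¬(i = 0 ∧ j = 0) →
      (t ∣ q * i + j ↔
        ∃ υ : ℕ, q * i + j = υ * t ∧ (a - b + 1) / 2 ≤ υ ∧ υ ≤ (a + b - 1) / 2) := by
  intro i j hi hj hij
  obtain ⟨c, hqac⟩ := ha
  have hc : 0 < c := Nat.pos_of_ne_zero (by rintro rfl; simp at hqac)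
  have hq : 1 ≤ q := by nlinarith
  rw [hqac, Nat.mul_div_cancel_left c (by omega)] at hi hj
  rw [Nat.sq_sub_one_div_eq (by omega) hqac] at ht
  subst ht
  set m := (a + b + 1) / 2
  refine ⟨fun ⟨υ, hυt⟩ => ⟨υ, hυt.trans (mul_comm _ _), ?_⟩,
    fun ⟨υ, hυt, _⟩ => ⟨υ, hυt.trans (mul_comm _ _)⟩⟩
  have hυ : 0 < υ := by
    refine Nat.pos_of_ne_zero fun h => hij ?_
    simp only [h, mul_zero, Nat.add_eq_zero_iff, mul_eq_zero] at hυt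
    omega
  have hmc : 2 ≤ m * c := le_mul_of_le_of_one_le (by omega) hc
  have hi2 : (i + 2 : ℤ) ≤ m * c := by exact_mod_cast (by omega : i + 2 ≤ m * c)
  have hj2 : (j + 2 : ℤ) ≤ m * c := by exact_mod_cast (by omega : j + 2 ≤ m * c)
  have hqacℤ : (q + 1 : ℤ) = a * c := by exact_mod_cast hqac
  have heq : (q * i + j : ℤ) = υ * (c * (q - 1)) := by
    rw [← Nat.cast_one, ← Nat.cast_sub hq]; exact_mod_cast hυt.trans (mul_comm _ _)
  have hυm : (υ : ℤ) < m := lt_of_mul_add_eq_mul_mul_sub_one (by exact_mod_cast hq)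
    (by exact_mod_cast hc) (by omega) hqacℤ hi2 hj2 heq
  have hυa : (a : ℤ) < m + υ := Int.lt_add_of_mul_add_eq_mul_mul_sub_one (by positivity)
    (by exact_mod_cast hc) (by exact_mod_cast hυ) (by positivity) hqacℤ hj2 heq
  omega

theorem stmt2 (q a b t : ℕ) (hq : IsPrimePow q) (ha : a ∣ q + 1)
    (ht : t = (q ^ 2 - 1) / a) (hab : (a + b) % 2 = 1) (hb : b + 3 ≤ a) :
    ∀ i j : ℕ, i ≤ ((a + b + 1) / 2) * ((q + 1) / a) - 2 →
      j ≤ ((a + b + 1) / 2) * ((q + 1) / a) - 2 → ¬(i = 0 ∧ j = 0) →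
      (t ∣ q * i + j ↔
        ∃ υ : ℕ, q * i + j = υ * t ∧ (a - b + 1) / 2 ≤ υ ∧ υ ≤ (a + b - 1) / 2) :=
  stmt2_general q a b t ha ht hb
end

section
/- Let q be a prime power, a | (q+1), t = (q^2-1)/a, and b an integer with a+b even and b ≤ a−4. For integers i,j with 0 ≤ i,j ≤ ((a+b+2)/2)·((q+1)/a) − 3 and (i,j) ≠ (0,0), one has t | (qi+j+q+1) if and only if qi+j+q+1 = υt for some integer υ with (a−b)/2 ≤ υ ≤ (a+b)/2. -/
/-!
Write `q + 1 = a c`, so that `t = (q - 1) c`, and put `s = (a + b) / 2`; the bound on `i` and `j`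
is `m - 3` with `m = (s + 1) c ≤ q`. If `N = q (i + 1) + (j + 1) = υ t`, then `N < (q - 1) m`
forces `υ ≤ s`. Adding `υ c` gives `N + υ c = υ q c`, so `q` divides `j + 1 + υ c`; this positive
number is at most `(υ + s + 1) c - 2`, which is below `q = a c - 1` unless `υ + s ≥ a`, i.e.
`υ ≥ (a - b) / 2`.
-/

theorem Nat.sq_sub_one_div_eq_of_mul_eq {q a c : ℕ} (hac : a * c = q + 1) (ha : 0 < a) :
    (q ^ 2 - 1) / a = (q - 1) * c := by
  have hsq : q ^ 2 - 1 = a * ((q - 1) * c) := by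
    rw [← one_pow 2, Nat.sq_sub_sq, one_pow, ← hac]
    ring
  rw [hsq, Nat.mul_div_cancel_left _ ha]

theorem Nat.mul_succ_add_succ_lt_pred_mul {q m i j : ℕ} (hi : i + 3 ≤ m) (hj : j + 3 ≤ m)
    (hm : m ≤ q) : q * (i + 1) + (j + 1) < (q - 1) * m := by
  obtain ⟨p, rfl⟩ : ∃ p, q = p + 1 := ⟨q - 1, by omega⟩
  rw [Nat.add_sub_cancel]
  nlinarith

theorem Nat.le_add_mul_of_mul_add_eq_mul_pred_mul {q x y υ c : ℕ}
    (h : q * x + y = υ * ((q - 1) * c)) (hy : 0 < y) : q ≤ y + υ * c := by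
  rcases Nat.eq_zero_or_pos q with rfl | hq
  · exact Nat.zero_le _
  have hsum : q * x + (y + υ * c) = q * (υ * c) := by
    obtain ⟨p, rfl⟩ : ∃ p, q = p + 1 := ⟨q - 1, by omega⟩
    rw [← add_assoc, h, Nat.add_sub_cancel]
    ring
  have hdvd : q ∣ y + υ * c :=
    (Nat.dvd_add_right (dvd_mul_right q x)).mp (hsum ▸ dvd_mul_right q _)
  exact Nat.le_of_dvd (by omega) hdvd

theorem stmt3_general (q a b t : ℕ) (ha : a ∣ q + 1)
    (ht : t = (q ^ 2 - 1) / a) (hb : b + 4 ≤ a) :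
    ∀ i j : ℕ, i ≤ ((a + b + 2) / 2) * ((q + 1) / a) - 3 →
      j ≤ ((a + b + 2) / 2) * ((q + 1) / a) - 3 → ¬(i = 0 ∧ j = 0) →
      (t ∣ q * i + j + q + 1 ↔
        ∃ υ : ℕ, q * i + j + q + 1 = υ * t ∧ (a - b) / 2 ≤ υ ∧ υ ≤ (a + b) / 2) := by
  intro i j hi hj _
  obtain ⟨c, hac⟩ : ∃ c, a * c = q + 1 := ha.imp fun _ h => h.symm
  have hc_pos : 0 < c := Nat.pos_of_ne_zero (by rintro rfl; omega)
  rw [Nat.sq_sub_one_div_eq_of_mul_eq hac (by omega)] at ht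
  set s := (a + b) / 2
  rw [show (a + b + 2) / 2 = s + 1 by omega, ← hac, Nat.mul_div_cancel_left _ (by omega)] at hi hj
  replace hi : i + 3 ≤ (s + 1) * c := by omega
  replace hj : j + 3 ≤ (s + 1) * c := by omega
  have hm_le : (s + 1) * c + c ≤ q + 1 := by nlinarith [show s + 2 ≤ a by omega]
  rw [show q * i + j + q + 1 = q * (i + 1) + (j + 1) by ring]
  refine ⟨fun ⟨υ, hυ⟩ => ⟨υ, hυ.trans (mul_comm _ _), ?_, ?_⟩,
    fun ⟨υ, hυ, _⟩ => ⟨υ, hυ.trans (mul_comm _ _)⟩⟩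
  · have hN : q * (i + 1) + (j + 1) = υ * ((q - 1) * c) := by rw [hυ, ht, mul_comm]
    have hq := Nat.le_add_mul_of_mul_add_eq_mul_pred_mul hN (Nat.succ_pos j)
    by_contra! hlt
    have hυc : (υ + s + 1) * c ≤ a * c := Nat.mul_le_mul_right c (by omega)
    linarith [show (υ + s + 1) * c = υ * c + (s + 1) * c by ring]
  · have hN := Nat.mul_succ_add_succ_lt_pred_mul hi hj (by omega : (s + 1) * c ≤ q)
    rw [hυ, ht, show (q - 1) * ((s + 1) * c) = (q - 1) * c * (s + 1) by ring] at hN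
    exact Nat.lt_succ_iff.mp (Nat.lt_of_mul_lt_mul_left hN)

theorem stmt3 (q a b t : ℕ) (hq : IsPrimePow q) (ha : a ∣ q + 1)
    (ht : t = (q ^ 2 - 1) / a) (hab : (a + b) % 2 = 0) (hb : b + 4 ≤ a) :
    ∀ i j : ℕ, i ≤ ((a + b + 2) / 2) * ((q + 1) / a) - 3 →
      j ≤ ((a + b + 2) / 2) * ((q + 1) / a) - 3 → ¬(i = 0 ∧ j = 0) →
      (t ∣ q * i + j + q + 1 ↔
        ∃ υ : ℕ, q * i + j + q + 1 = υ * t ∧ (a - b) / 2 ≤ υ ∧ υ ≤ (a + b) / 2) :=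
  stmt3_general q a b t ha ht hb
end

section
/- Let q be a prime power, a | (q+1), t = (q^2−1)/a, ξ a primitive element of F_{q^2}, m = (a−b+1)/2 with a+b odd, and for i = 1,…,b let φ_i = (1, ξ^{t(m+i−1)}, ξ^{2t(m+i−1)}, …, ξ^{bt(m+i−1)}) ∈ F_{q^2}^{b+1}. Then for each i = 1,…,b, the coordinatewise q-th power of φ_i equals φ_{b+1−i}. -/
/-!
The element `ζ = ξ ^ t` satisfies `ζ ^ a = 1` and `ζ ^ (q + 1) = 1`, so its `q`-th power is its
inverse. The exponents `m + i - 1` and `m + (b + 1 - i) - 1` add up to `2m + b - 1 = a`, hence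
the `q`-th power of `ζ ^ (m + i - 1)` is `ζ ^ (m + (b + 1 - i) - 1)`, and likewise for each
further power `l`.
-/

theorem pow_pow_eq_pow_of_pow_add_eq_one {M : Type*} [Monoid M] {ζ : M} {q A B : ℕ}
    (hq : ζ ^ (q + 1) = 1) (hAB : ζ ^ (A + B) = 1) : (ζ ^ A) ^ q = ζ ^ B :=
  calc (ζ ^ A) ^ q = ζ ^ (A * q) * ζ ^ (A + B) := by rw [hAB, mul_one, pow_mul]
    _ = (ζ ^ (q + 1)) ^ A * ζ ^ B := by
      rw [← pow_add, ← pow_mul, ← pow_add]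
      congr 1
      ring
    _ = ζ ^ B := by rw [hq, one_pow, one_mul]

theorem dvd_sq_sub_one_of_dvd_add_one {a q : ℕ} (ha : a ∣ q + 1) : a ∣ q ^ 2 - 1 := by
  rw [← one_pow 2, Nat.sq_sub_sq]
  exact ha.mul_right _

section

variable {M : Type*} [Monoid M] {ξ : M} {q a : ℕ}

theorem pow_sq_sub_one_div_pow_eq_one (hξ : ξ ^ (q ^ 2 - 1) = 1) (ha : a ∣ q + 1) :
    (ξ ^ ((q ^ 2 - 1) / a)) ^ a = 1 := by
  rw [← pow_mul, Nat.div_mul_cancel (dvd_sq_sub_one_of_dvd_add_one ha), hξ]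

theorem pow_sq_sub_one_div_pow_add_one_eq_one (hξ : ξ ^ (q ^ 2 - 1) = 1) (ha : a ∣ q + 1) :
    (ξ ^ ((q ^ 2 - 1) / a)) ^ (q + 1) = 1 := by
  obtain ⟨c, hc⟩ := ha
  rw [hc, pow_mul, pow_sq_sub_one_div_pow_eq_one hξ ⟨c, hc⟩, one_pow]

end

theorem stmt8_general (q a t b m : ℕ) (ha : a ∣ q + 1)
    (ht : t = (q ^ 2 - 1) / a) (hb : b + 3 ≤ a) (hab : (a + b) % 2 = 1)
    (hm : m = (a - b + 1) / 2)
    (F : Type) [Field F]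
    (ξ : F) (hξ : orderOf ξ = q ^ 2 - 1) :
    ∀ i : ℕ, 1 ≤ i → i ≤ b → ∀ l : Fin (b + 1),
      (ξ ^ (t * (m + i - 1) * (l : ℕ))) ^ q = ξ ^ (t * (m + (b + 1 - i) - 1) * (l : ℕ)) := by
  intro i hi1 hib l
  have hξ1 : ξ ^ (q ^ 2 - 1) = 1 := hξ ▸ pow_orderOf_eq_one ξ
  have hAB : (m + i - 1) + (m + (b + 1 - i) - 1) = a := by omega
  set ζ := (ξ ^ t) ^ (l : ℕ)
  have hζq : ζ ^ (q + 1) = 1 := by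
    rw [pow_right_comm, ht, pow_sq_sub_one_div_pow_add_one_eq_one hξ1 ha, one_pow]
  have hζa : ζ ^ a = 1 := by
    rw [pow_right_comm, ht, pow_sq_sub_one_div_pow_eq_one hξ1 ha, one_pow]
  have hpow (k : ℕ) : ξ ^ (t * k * l) = ζ ^ k := by
    rw [← pow_mul, ← pow_mul, mul_right_comm, mul_assoc]
  rw [hpow, hpow]
  exact pow_pow_eq_pow_of_pow_add_eq_one hζq (hAB ▸ hζa)

theorem stmt8 (q a t b m : ℕ) (hq : IsPrimePow q) (ha : a ∣ q + 1)
    (ht : t = (q ^ 2 - 1) / a) (hb : b + 3 ≤ a) (hab : (a + b) % 2 = 1)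
    (hm : m = (a - b + 1) / 2)
    (F : Type) [Field F] [Fintype F] (hF : Fintype.card F = q ^ 2)
    (ξ : F) (hξ : orderOf ξ = q ^ 2 - 1) :
    ∀ i : ℕ, 1 ≤ i → i ≤ b → ∀ l : Fin (b + 1),
      (ξ ^ (t * (m + i - 1) * (l : ℕ))) ^ q = ξ ^ (t * (m + (b + 1 - i) - 1) * (l : ℕ)) :=
  stmt8_general q a t b m ha ht hb hab hm F ξ hξ
end

section
/- Let q be a prime power, a | (q+1), t = (q^2−1)/a, b ≤ min{a−3, q−3} with a+b odd, and m = (a−b+1)/2. Then there exists a vector ρ = (ρ_0,…,ρ_b) ∈ (F_q^*)^{b+1} such that the sums ∑_{l=0}^b ρ_l and ∑_{l=0}^b ξ^{(m+i)lt} ρ_l for i = 0,1,…,b−1 are all nonzero (where ξ is a primitive element of F_{q^2} and the sums are evaluated in F_{q^2}). -/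
/-! The elements of `F_q^*` are the `q - 1` roots of `X ^ (q - 1) - 1`, generated by `ξ ^ (q + 1)`.
Each of the `b + 1` sums is a linear form in `ρ` whose coefficient of `ρ_0` is `1`, so it
vanishes on at most `(q - 1) ^ b` of the `(q - 1) ^ (b + 1)` tuples in `(F_q^*) ^ (b + 1)`;
since `b + 1 < q - 1`, some tuple avoids all of them. -/

open Finset Polynomial

section LinearForms

variable {R : Type*} [Ring R] [NoZeroDivisors R]

/-- When `c 0 ≠ 0`, a zero of `∑ l, c l * ρ l` is determined by its tail `Fin.tail ρ`. -/
lemma card_filter_linearForm_eq_zero_le [DecidableEq R] (T : Finset R) {n : ℕ}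
    (c : Fin (n + 1) → R) (hc : c 0 ≠ 0) :
    #{ρ ∈ Fintype.piFinset (fun _ => T) | ∑ l, c l * ρ l = 0} ≤ #T ^ n := by
  calc #{ρ ∈ Fintype.piFinset (fun _ => T) | ∑ l, c l * ρ l = 0}
      ≤ #(Fintype.piFinset fun _ : Fin n => T) := by
        refine card_le_card_of_injOn Fin.tail (fun ρ hρ => ?_) fun ρ hρ ρ' hρ' htail => ?_
        · simp only [coe_filter, Set.mem_ofPred_eq, Fintype.mem_piFinset] at hρ
          exact Fintype.mem_piFinset.mpr fun j => hρ.1 j.succ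
        · simp only [coe_filter, Set.mem_ofPred_eq] at hρ hρ'
          have hsum := hρ.2.trans hρ'.2.symm
          rw [Fin.sum_univ_succ, Fin.sum_univ_succ] at hsum
          have htail' : ∀ j : Fin n, ρ j.succ = ρ' j.succ := congrFun htail
          simp only [htail', add_left_inj] at hsum
          have hhead : ρ 0 = ρ' 0 := mul_left_cancel₀ hc hsum
          rw [← Fin.cons_self_tail ρ, ← Fin.cons_self_tail ρ', hhead, htail]
    _ = #T ^ n := by simp

lemma exists_forall_linearForm_ne_zero {ι : Type*} [Fintype ι] (T : Finset R) {n : ℕ}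
    (c : ι → Fin (n + 1) → R) (hc : ∀ i, c i 0 ≠ 0) (hcard : Fintype.card ι < #T) :
    ∃ ρ : Fin (n + 1) → R, (∀ l, ρ l ∈ T) ∧ ∀ i, ∑ l, c i l * ρ l ≠ 0 := by
  classical
  set S := Fintype.piFinset fun _ : Fin (n + 1) => T
  set Z := univ.biUnion fun i => {ρ ∈ S | ∑ l, c i l * ρ l = 0}
  have hZ : #Z < #S :=
    calc #Z ≤ ∑ i, #{ρ ∈ S | ∑ l, c i l * ρ l = 0} := card_biUnion_le
      _ ≤ ∑ _i : ι, #T ^ n := sum_le_sum fun i _ => card_filter_linearForm_eq_zero_le T _ (hc i)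
      _ = Fintype.card ι * #T ^ n := by rw [sum_const, card_univ, smul_eq_mul]
      _ < #T * #T ^ n := Nat.mul_lt_mul_of_pos_right hcard (pow_pos (by omega) n)
      _ = #S := by simp [S, pow_succ']
  obtain ⟨ρ, hρS, hρZ⟩ := exists_mem_notMem_of_card_lt_card hZ
  refine ⟨ρ, Fintype.mem_piFinset.mp hρS, fun i hi => hρZ ?_⟩
  exact mem_biUnion.mpr ⟨i, mem_univ i, mem_filter.mpr ⟨hρS, hi⟩⟩

end LinearForms

lemma isPrimitiveRoot_pow_succ_of_orderOf_eq {F : Type*} [CommMonoid F] {q : ℕ} (hq : 2 ≤ q)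
    {ξ : F} (hξ : orderOf ξ = q ^ 2 - 1) : IsPrimitiveRoot (ξ ^ (q + 1)) (q - 1) := by
  have hq2 : q ^ 2 - 1 = (q + 1) * (q - 1) := by simpa using Nat.sq_sub_sq q 1
  refine (IsPrimitiveRoot.orderOf ξ).pow ?_ (hξ.trans hq2)
  rw [hξ, hq2]
  exact Nat.mul_pos (by omega) (by omega)

theorem stmt11_general (q t b m : ℕ) (hbq : b + 3 ≤ q)
    (F : Type) [Field F]
    (ξ : F) (hξ : orderOf ξ = q ^ 2 - 1) :
    ∃ ρ : Fin (b + 1) → F,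
      (∀ l, ρ l ≠ 0 ∧ (ρ l) ^ q = ρ l) ∧
      (∑ l, ρ l ≠ 0) ∧
      ∀ i : ℕ, i < b → ∑ l : Fin (b + 1), ξ ^ ((m + i) * (l : ℕ) * t) * ρ l ≠ 0 := by
  have hT := (isPrimitiveRoot_pow_succ_of_orderOf_eq (by omega) hξ).card_nthRootsFinset
  let c : Option (Fin b) → Fin (b + 1) → F := fun i l =>
    i.elim 1 fun i => ξ ^ ((m + i) * (l : ℕ) * t)
  obtain ⟨ρ, hρT, hρc⟩ := exists_forall_linearForm_ne_zero (nthRootsFinset (q - 1) (1 : F)) c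
    (by rintro (_ | i) <;> simp [c])
    (by simp only [Fintype.card_option, Fintype.card_fin, hT]; omega)
  refine ⟨ρ, fun l => ⟨ne_zero_of_mem_nthRootsFinset one_ne_zero (hρT l), ?_⟩,
    by simpa [c] using hρc none, fun i hi => by simpa [c] using hρc (some ⟨i, hi⟩)⟩
  have hρl := (mem_nthRootsFinset (by omega) 1).mp (hρT l)
  rw [← Nat.sub_add_cancel (by omega : 1 ≤ q), pow_succ, hρl, one_mul]

theorem stmt11 (q a t b m : ℕ) (hq : IsPrimePow q) (ha : a ∣ q + 1)
    (ht : t = (q ^ 2 - 1) / a) (hba : b + 3 ≤ a) (hbq : b + 3 ≤ q)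
    (hab : (a + b) % 2 = 1) (hm : m = (a - b + 1) / 2)
    (F : Type) [Field F] [Fintype F] (hF : Fintype.card F = q ^ 2)
    (ξ : F) (hξ : orderOf ξ = q ^ 2 - 1) :
    ∃ ρ : Fin (b + 1) → F,
      (∀ l, ρ l ≠ 0 ∧ (ρ l) ^ q = ρ l) ∧
      (∑ l, ρ l ≠ 0) ∧
      ∀ i : ℕ, i < b → ∑ l : Fin (b + 1), ξ ^ ((m + i) * (l : ℕ) * t) * ρ l ≠ 0 :=
  stmt11_general q t b m hbq F ξ hξ
end

section
/- Let q be a prime power, a | (q+1), t = (q^2−1)/a, b ≤ min{a−4, q−3} with a+b even, and m = (a−b)/2. Then there exists a vector ρ = (ρ_0,…,ρ_b) ∈ (F_q^*)^{b+1} such that for each i = 0,1,…,b, the sum ∑_{l=0}^b ξ^{((m+i)t − q − 1)l} ρ_l is nonzero in F_{q^2}. -/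
/-!
Take `ρ = (c, 1, …, 1)`. The `i`-th sum is then `c + sᵢ` with `sᵢ` independent of `c`, so only
the `b + 1` values `c = -sᵢ` are forbidden. The powers of `ξ ^ (q + 1)`, an element of order
`q - 1`, give `q - 1 > b + 1` admissible values of `c` in `𝔽_q^*`.
-/

open Finset

lemma exists_mem_forall_add_ne_zero {A ι : Type*} [AddGroup A] [DecidableEq A]
    {S : Finset A} {I : Finset ι} (s : ι → A) (h : #I < #S) :
    ∃ c ∈ S, ∀ i ∈ I, c + s i ≠ 0 := by
  obtain ⟨c, hcS, hc⟩ :=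
    exists_mem_notMem_of_card_lt_card ((card_image_le (s := I) (f := (-s ·))).trans_lt h)
  exact ⟨c, hcS, fun i hi hci => hc (mem_image.2 ⟨i, hi, (eq_neg_of_add_eq_zero_left hci).symm⟩)⟩

lemma exists_finset_card_eq_orderOf_pow_succ_eq_self {M₀ : Type*} [MonoidWithZero M₀]
    [Nontrivial M₀] (ζ : M₀ˣ) :
    ∃ S : Finset M₀, #S = orderOf ζ ∧ ∀ x ∈ S, x ≠ 0 ∧ x ^ (orderOf ζ + 1) = x := by
  classical
  refine ⟨(range (orderOf ζ)).image fun k => ((ζ ^ k : M₀ˣ) : M₀), ?_, ?_⟩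
  · rw [card_image_of_injOn, card_range]
    intro j hj k hk hjk
    exact pow_injOn_Iio_orderOf (by simpa using hj) (by simpa using hk) (Units.ext hjk)
  · simp only [mem_image, forall_exists_index, and_imp]
    rintro _ k - rfl
    refine ⟨Units.ne_zero _, ?_⟩
    rw [← Units.val_pow_eq_pow_val, pow_succ', pow_right_comm, pow_orderOf_eq_one, one_pow,
      mul_one]

lemma orderOf_pow_succ_eq_sub_one {G : Type*} [Monoid G] {ξ : G} {q : ℕ}
    (hξ : orderOf ξ = q ^ 2 - 1) : orderOf (ξ ^ (q + 1)) = q - 1 := by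
  have hfac : q ^ 2 - 1 = (q + 1) * (q - 1) := by simpa using Nat.sq_sub_sq q 1
  rw [orderOf_pow_of_dvd q.succ_ne_zero (hξ ▸ hfac ▸ dvd_mul_right _ _), hξ, hfac,
    Nat.mul_div_cancel_left _ q.succ_pos]

theorem stmt12_general (q t b m : ℕ) (hbq : b + 3 ≤ q)
    (F : Type) [Field F]
    (ξ : Fˣ) (hξ : orderOf ξ = q ^ 2 - 1) :
    ∃ ρ : Fin (b + 1) → F,
      (∀ l, ρ l ≠ 0 ∧ (ρ l) ^ q = ρ l) ∧
      ∀ i : ℕ, i ≤ b →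
        ∑ l : Fin (b + 1),
          ((ξ ^ ((((m : ℤ) + i) * t - q - 1) * (l : ℕ)) : Fˣ) : F) * ρ l ≠ 0 := by
  classical
  obtain ⟨S, hScard, hS⟩ := exists_finset_card_eq_orderOf_pow_succ_eq_self (ξ ^ (q + 1))
  rw [orderOf_pow_succ_eq_sub_one hξ] at hScard hS
  rw [Nat.sub_add_cancel (by omega)] at hS
  obtain ⟨c, hcS, hc⟩ := exists_mem_forall_add_ne_zero (S := S) (I := range (b + 1))
    (fun i => ∑ l : Fin b, ((ξ ^ ((((m : ℤ) + i) * t - q - 1) * (l + 1 : ℕ)) : Fˣ) : F))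
    (by rw [card_range, hScard]; omega)
  refine ⟨Fin.cons c fun _ => 1, fun l => ?_, fun i hi => ?_⟩
  · cases l using Fin.cases with
    | zero => simpa using hS c hcS
    | succ l => simp
  · simpa [Fin.sum_univ_succ] using hc i (mem_range.2 (by omega))

theorem stmt12 (q a t b m : ℕ) (hq : IsPrimePow q) (ha : a ∣ q + 1)
    (ht : t = (q ^ 2 - 1) / a) (hba : b + 4 ≤ a) (hbq : b + 3 ≤ q)
    (hab : (a + b) % 2 = 0) (hm : m = (a - b) / 2)
    (F : Type) [Field F] [Fintype F] (hF : Fintype.card F = q ^ 2)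
    (ξ : Fˣ) (hξ : orderOf ξ = q ^ 2 - 1) :
    ∃ ρ : Fin (b + 1) → F,
      (∀ l, ρ l ≠ 0 ∧ (ρ l) ^ q = ρ l) ∧
      ∀ i : ℕ, i ≤ b →
        ∑ l : Fin (b + 1),
          ((ξ ^ ((((m : ℤ) + i) * t - q - 1) * (l : ℕ)) : Fˣ) : F) * ρ l ≠ 0 :=
  stmt12_general q t b m hbq F ξ hξ
end

section
/- Let q be a prime power, a | (q+1) with a ≥ 2, t = (q^2−1)/a, ξ a primitive element of F_{q^2}, β = ξ^a, b ≤ min{a−3, q−3} with a+b odd, n = (b+1)t. Let a-vector a⃗ ∈ F_{q^2}^n have entries ξ^l β^s for 0 ≤ l ≤ b, 0 ≤ s ≤ t−1, and let v ∈ (F_{q^2}^*)^n have the constant value v_l on the l-th block, where v_l^{q+1} = ρ_l for a vector ρ ∈ (F_q^*)^{b+1} as in Lemma 3.1 (i.e., ∑_l ρ_l ≠ 0 and ∑_l ξ^{υtl} ρ_l ≠ 0 for (a−b+1)/2 ≤ υ ≤ (a+b−1)/2). Then for 0 ≤ i, j ≤ ((a+b+1)/2)·((q+1)/a) − 2, the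 sum σ_{i,j} = ∑_{l=0}^{b} ∑_{s=0}^{t−1} (ξ^l β^s)^{qi+j} ρ_l is nonzero if and only if (i,j) = (0,0) or qi+j = υt for some υ with (a−b+1)/2 ≤ υ ≤ (a+b−1)/2. -/
open Finset

/-!
Writing `N = q i + j` and `β = ξ ^ a`, the double sum factors as
`(∑_{s < t} (β ^ N) ^ s) · (∑_l ξ ^ (N l) ρ_l)`. Since `β` is a primitive `t`-th root of unity,
the first factor is `t ≠ 0` if `t ∣ N` and `0` otherwise. When `t ∣ N`, say `N = υ t`, the second
factor is one of the sums assumed nonzero: the bounds on `i` and `j` force `υ = 0` or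
`(a - b + 1)/2 ≤ υ ≤ (a + b - 1)/2`. So both sides of the equivalence say `t ∣ N`.
-/

theorem IsPrimitiveRoot.geom_sum_pow_ne_zero_iff {R : Type*} [CommRing R] [IsDomain R]
    {ζ : R} {k : ℕ} (hζ : IsPrimitiveRoot ζ k) (hk : 0 < k) (N : ℕ) :
    ∑ s ∈ range k, (ζ ^ N) ^ s ≠ 0 ↔ k ∣ N := by
  have : NeZero k := ⟨hk.ne'⟩
  by_cases hN : k ∣ N
  · have hζN : ζ ^ N = 1 := (hζ.pow_eq_one_iff_dvd N).mpr hN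
    simpa [hζN, hN] using hζ.neZero'.out
  · have hζN : ζ ^ N ≠ 1 := mt (hζ.pow_eq_one_iff_dvd N).mp hN
    have hζNk : (ζ ^ N) ^ k = 1 := by rw [← pow_mul, mul_comm, pow_mul, hζ.pow_eq_one, one_pow]
    have : (1 - ζ ^ N) * ∑ s ∈ range k, (ζ ^ N) ^ s = 0 := by
      rw [mul_neg_geom_sum, hζNk, sub_self]
    simpa [hN, sub_ne_zero.mpr hζN.symm] using this

lemma sum_sum_pow_mul_pow_mul_eq_mul {R ι : Type*} [CommSemiring R] (L : Finset ι) (e : ι → ℕ)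
    (x y : R) (ρ : ι → R) (t N : ℕ) :
    ∑ l ∈ L, ∑ s ∈ range t, (x ^ e l * y ^ s) ^ N * ρ l
      = (∑ s ∈ range t, (y ^ N) ^ s) * ∑ l ∈ L, (x ^ N) ^ e l * ρ l := by
  rw [sum_mul, sum_comm]
  refine Finset.sum_congr rfl fun l _ => ?_
  rw [mul_sum]
  refine Finset.sum_congr rfl fun s _ => ?_
  ring

lemma sub_le_and_le_sub_one_of_mul_add_eq {q a b c m υ i j : ℕ} (hac : a * c = q + 1)
    (hm : 2 * m = a + b + 1) (hba : b + 3 ≤ a) (hi : i + 2 ≤ m * c) (hj : j + 2 ≤ m * c)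
    (hυ : q * i + j = υ * ((q - 1) * c)) (hυ0 : 0 < υ) :
    m - b ≤ υ ∧ υ ≤ m - 1 := by
  have hc : 1 ≤ c := Nat.pos_of_ne_zero fun h => by simp [h] at hac
  have hq : 2 ≤ q := by nlinarith
  zify [hq.trans' one_le_two] at hυ
  have hb : b ≤ m := by omega
  have hm1 : 1 ≤ m := by omega
  zify [hb, hm1]
  -- In `q (υ c - i) = υ c + j`, the left side is at least `q`, which rules out `υ < m - b`, and
  -- grows like `q (υ - m) c` once `υ ≥ m`, faster than the right side.
  have hk : (q : ℤ) * (υ * c - i) = υ * c + j := by linear_combination -hυ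
  have hk1 : (1 : ℤ) ≤ υ * c - i := by nlinarith
  constructor
  · by_contra! h
    nlinarith [mul_le_mul_of_nonneg_left hk1 (by positivity : (0 : ℤ) ≤ q),
      mul_nonneg (by omega : (0 : ℤ) ≤ a - υ - m) (by positivity : (0 : ℤ) ≤ c)]
  · by_contra! h
    have hυm : ((υ : ℤ) - m) * c + 2 ≤ υ * c - i := by nlinarith
    nlinarith [mul_le_mul_of_nonneg_left hυm (by positivity : (0 : ℤ) ≤ q),
      mul_nonneg (by omega : (0 : ℤ) ≤ q - 1)
        (mul_nonneg (by omega : (0 : ℤ) ≤ υ - m) (by positivity : (0 : ℤ) ≤ c)),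
      mul_nonneg (by omega : (0 : ℤ) ≤ a - b - 3) (by positivity : (0 : ℤ) ≤ c)]

lemma dvd_mul_add_iff {q a b c m i j : ℕ} (hac : a * c = q + 1) (hm : 2 * m = a + b + 1)
    (hba : b + 3 ≤ a) (hi : i + 2 ≤ m * c) (hj : j + 2 ≤ m * c) :
    (q - 1) * c ∣ q * i + j ↔
      (i = 0 ∧ j = 0) ∨ ∃ υ, q * i + j = υ * ((q - 1) * c) ∧ m - b ≤ υ ∧ υ ≤ m - 1 := by
  constructor
  · rintro ⟨υ, hυ⟩
    rw [Nat.mul_comm ((q - 1) * c)] at hυ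
    rcases υ.eq_zero_or_pos with rfl | hυ0
    · have hq : q ≠ 0 := by rintro rfl; simp [mul_eq_one] at hac; omega
      left
      simpa [hq] using hυ
    · exact .inr ⟨υ, hυ, sub_le_and_le_sub_one_of_mul_add_eq hac hm hba hi hj hυ hυ0⟩
  · rintro (⟨rfl, rfl⟩ | ⟨υ, hυ, -⟩)
    · simp
    · exact hυ ▸ dvd_mul_left _ _

theorem stmt15_general (q a t b : ℕ) (ha : a ∣ q + 1)
    (ht : t = (q ^ 2 - 1) / a) (hba : b + 3 ≤ a)
    (hab : (a + b) % 2 = 1)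
    (F : Type) [Field F]
    (ξ : F) (hξ : orderOf ξ = q ^ 2 - 1)
    (ρ : Fin (b + 1) → F)
    (hsum0 : ∑ l, ρ l ≠ 0)
    (hsumυ : ∀ υ : ℕ, (a - b + 1) / 2 ≤ υ → υ ≤ (a + b - 1) / 2 →
      ∑ l : Fin (b + 1), ξ ^ (υ * t * (l : ℕ)) * ρ l ≠ 0) :
    ∀ i j : ℕ, i ≤ ((a + b + 1) / 2) * ((q + 1) / a) - 2 →
      j ≤ ((a + b + 1) / 2) * ((q + 1) / a) - 2 →
      ((∑ l : Fin (b + 1), ∑ s ∈ Finset.range t,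
          (ξ ^ (l : ℕ) * (ξ ^ a) ^ s) ^ (q * i + j) * ρ l) ≠ 0 ↔
        ((i = 0 ∧ j = 0) ∨
          ∃ υ : ℕ, q * i + j = υ * t ∧ (a - b + 1) / 2 ≤ υ ∧ υ ≤ (a + b - 1) / 2)) := by
  intro i j hi hj
  set c := (q + 1) / a
  set m := (a + b + 1) / 2
  have hac : a * c = q + 1 := Nat.mul_div_cancel' ha
  have hc : 0 < c := Nat.pos_of_ne_zero fun h => by simp [h] at hac
  have hmc : 2 ≤ m * c := Nat.le_mul_of_pos_right _ hc |>.trans' (by omega)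
  have hq : 2 ≤ q := by nlinarith
  have hq21 : q ^ 2 - 1 = a * ((q - 1) * c) := by
    rw [mul_left_comm, hac]
    zify [hq.trans' one_le_two, Nat.one_le_pow 2 q (by omega)]
    ring
  have htc : t = (q - 1) * c := by rw [ht, hq21, Nat.mul_div_cancel_left _ (by omega)]
  have hβ : IsPrimitiveRoot (ξ ^ a) t :=
    ht ▸ (hξ ▸ IsPrimitiveRoot.orderOf ξ).pow_of_dvd (by omega) (hq21 ▸ dvd_mul_right _ _)
  have hRHS := dvd_mul_add_iff (i := i) (j := j) hac (by omega : 2 * m = a + b + 1) hba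
    (by omega) (by omega)
  rw [← htc, show m - b = (a - b + 1) / 2 by omega, show m - 1 = (a + b - 1) / 2 by omega]
    at hRHS
  rw [← hRHS, sum_sum_pow_mul_pow_mul_eq_mul, mul_ne_zero_iff,
    hβ.geom_sum_pow_ne_zero_iff (htc ▸ Nat.mul_pos (by omega) hc), and_iff_left_iff_imp]
  intro hdvd
  rcases hRHS.mp hdvd with ⟨rfl, rfl⟩ | ⟨υ, hυ, hυ₁, hυ₂⟩
  · simpa using hsum0
  · convert hsumυ υ hυ₁ hυ₂ using 3 with l
    rw [hυ, ← pow_mul]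

theorem stmt15 (q a t b : ℕ) (hq : IsPrimePow q) (ha : a ∣ q + 1) (ha2 : 2 ≤ a)
    (ht : t = (q ^ 2 - 1) / a) (hba : b + 3 ≤ a) (hbq : b + 3 ≤ q)
    (hab : (a + b) % 2 = 1)
    (F : Type) [Field F] [Fintype F] (hF : Fintype.card F = q ^ 2)
    (ξ : F) (hξ : orderOf ξ = q ^ 2 - 1)
    (ρ : Fin (b + 1) → F)
    (hρ : ∀ l, ρ l ≠ 0 ∧ (ρ l) ^ q = ρ l)
    (hsum0 : ∑ l, ρ l ≠ 0)
    (hsumυ : ∀ υ : ℕ, (a - b + 1) / 2 ≤ υ → υ ≤ (a + b - 1) / 2 →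
      ∑ l : Fin (b + 1), ξ ^ (υ * t * (l : ℕ)) * ρ l ≠ 0) :
    ∀ i j : ℕ, i ≤ ((a + b + 1) / 2) * ((q + 1) / a) - 2 →
      j ≤ ((a + b + 1) / 2) * ((q + 1) / a) - 2 →
      ((∑ l : Fin (b + 1), ∑ s ∈ Finset.range t,
          (ξ ^ (l : ℕ) * (ξ ^ a) ^ s) ^ (q * i + j) * ρ l) ≠ 0 ↔
        ((i = 0 ∧ j = 0) ∨
          ∃ υ : ℕ, q * i + j = υ * t ∧ (a - b + 1) / 2 ≤ υ ∧ υ ≤ (a + b - 1) / 2)) :=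
  stmt15_general q a t b ha ht hba hab F ξ hξ ρ hsum0 hsumυ
end

section
/- Let q be a prime power, a | (q+1), t = (q^2−1)/a, and b ≤ a−4 with a+b even. If i, j, υ are integers with 0 ≤ i, j ≤ ((a+b+2)/2)·((q+1)/a) − 3 and qi + j + q + 1 = υt with 0 < υ < a, then i = υ(q+1)/a − 2 and j = q − υ(q+1)/a − 1, and moreover (a−b)/2 ≤ υ ≤ (a+b)/2. -/
/-! With `c = (q + 1) / a` we have `t = c (q - 1)`, and for `s = υ c` the identity
`s (q - 1) = q (s - 1) + (q - s)` writes `υ t` in base `q`. The bounds on `j` force `j + 1 < q`, so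
comparing with `q (i + 1) + (j + 1)` gives `i + 1 = s - 1` and `j + 1 = q - s`. Feeding these back
into the bounds on `i` and `j` pins `υ` between `(a - b) / 2` and `(a + b) / 2`. -/

theorem Nat.sq_sub_one_div_of_dvd {q a : ℕ} (ha : a ∣ q + 1) :
    (q ^ 2 - 1) / a = (q + 1) / a * (q - 1) := by
  rw [Nat.div_mul_right_comm ha, ← Nat.sq_sub_sq, one_pow]

theorem Nat.eq_and_eq_of_mul_add_eq_mul_add {q x y x' y' : ℕ} (hy : y < q) (hy' : y' < q)
    (h : q * x + y = q * x' + y') : x = x' ∧ y = y' := by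
  have hq : 0 < q := by omega
  have hdiv := congrArg (· / q) h
  have hmod := congrArg (· % q) h
  simp only [Nat.mul_add_div hq, Nat.div_eq_of_lt hy, Nat.div_eq_of_lt hy', Nat.mul_add_mod,
    Nat.mod_eq_of_lt hy, Nat.mod_eq_of_lt hy', add_zero] at hdiv hmod
  exact ⟨hdiv, hmod⟩

theorem Nat.mul_sub_one_eq_mul_add {q s : ℕ} (hs : 1 ≤ s) (hsq : s ≤ q) :
    s * (q - 1) = q * (s - 1) + (q - s) := by
  obtain ⟨s, rfl⟩ := Nat.exists_eq_add_of_le' hs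
  obtain ⟨r, rfl⟩ := Nat.exists_eq_add_of_le hsq
  rw [show s + 1 + r - 1 = s + r by omega, Nat.add_sub_cancel, Nat.add_sub_cancel_left]
  ring

theorem Nat.add_two_eq_and_add_eq_of_mul_add_eq_mul_sub_one {q s i j : ℕ} (hs : 1 ≤ s)
    (hsq : s ≤ q) (hj : j + 1 < q) (h : q * i + j + q + 1 = s * (q - 1)) :
    i + 2 = s ∧ j + 1 + s = q := by
  rw [Nat.mul_sub_one_eq_mul_add hs hsq] at h
  have := Nat.eq_and_eq_of_mul_add_eq_mul_add (x := i + 1) hj (show q - s < q by omega)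
    (by rw [← h]; ring)
  omega

theorem stmt17_general (q a t b i j υ : ℕ) (ha : a ∣ q + 1)
    (ht : t = (q ^ 2 - 1) / a) (hb : b + 4 ≤ a)
    (hi : i ≤ ((a + b + 2) / 2) * ((q + 1) / a) - 3)
    (hj : j ≤ ((a + b + 2) / 2) * ((q + 1) / a) - 3)
    (hυ1 : 0 < υ) (hυ2 : υ < a)
    (heq : q * i + j + q + 1 = υ * t) :
    i = υ * ((q + 1) / a) - 2 ∧ j = q - υ * ((q + 1) / a) - 1 ∧
      (a - b) / 2 ≤ υ ∧ υ ≤ (a + b) / 2 := by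
  rw [ht, Nat.sq_sub_one_div_of_dvd ha, ← mul_assoc] at heq
  set c := (q + 1) / a
  set m := (a + b) / 2
  have hqc : q + 1 = a * c := (Nat.mul_div_cancel' ha).symm
  have hc : 1 ≤ c := Nat.pos_of_ne_zero (by rintro hc; simp [hc] at hqc)
  rw [show (a + b + 2) / 2 = m + 1 by omega] at hi hj
  have hυc : υ * c + c ≤ q + 1 := by
    rw [← Nat.add_one_mul, hqc]; exact Nat.mul_le_mul_right c hυ2
  have hmc : (m + 1) * c + c ≤ q + 1 := by
    rw [← Nat.add_one_mul, hqc]; exact Nat.mul_le_mul_right c (by omega)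
  have hm3 : 3 ≤ (m + 1) * c := (show 3 ≤ m + 1 by omega).trans (Nat.le_mul_of_pos_right _ hc)
  obtain ⟨hi', hj'⟩ := Nat.add_two_eq_and_add_eq_of_mul_add_eq_mul_sub_one
    (Nat.one_le_iff_ne_zero.mpr (by positivity)) (by omega) (by omega) heq
  refine ⟨by omega, by omega, ?_, ?_⟩
  · have := Nat.lt_of_mul_lt_mul_right (show a * c < (υ + (m + 1)) * c by rw [add_mul]; omega)
    omega
  · have := Nat.lt_of_mul_lt_mul_right (show υ * c < (m + 1) * c by omega)
    omega

theorem stmt17 (q a t b i j υ : ℕ) (hq : IsPrimePow q) (ha : a ∣ q + 1)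
    (ht : t = (q ^ 2 - 1) / a) (hb : b + 4 ≤ a) (hab : (a + b) % 2 = 0)
    (hi : i ≤ ((a + b + 2) / 2) * ((q + 1) / a) - 3)
    (hj : j ≤ ((a + b + 2) / 2) * ((q + 1) / a) - 3)
    (hυ1 : 0 < υ) (hυ2 : υ < a)
    (heq : q * i + j + q + 1 = υ * t) :
    i = υ * ((q + 1) / a) - 2 ∧ j = q - υ * ((q + 1) / a) - 1 ∧
      (a - b) / 2 ≤ υ ∧ υ ≤ (a + b) / 2 :=
  stmt17_general q a t b i j υ ha ht hb hi hj hυ1 hυ2 heq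
end

section
/- Let q be a prime power, a | (q+1), t = (q^2−1)/a, ξ a primitive element of F_{q^2}, b ≤ a−4 with a+b even, m = (a−b)/2. For i = 1,…,b+1 define φ_i = (1, ξ^{(m+i−1)t−q−1}, ξ^{2((m+i−1)t−q−1)}, …, ξ^{b((m+i−1)t−q−1)}) ∈ F_{q^2}^{b+1}. Then the coordinatewise q-th power of φ_i equals φ_{b+2−i} for each i = 1,…,b+1. -/
/-!
Modulo `q² - 1` we have `q t ≡ -t` (as `(q + 1) t` is a multiple of `a t = q² - 1`) and
`q (q + 1) ≡ q + 1`, so raising `ξ^((m+i-1)t - q - 1)` to the `q`-th power replaces `m + i - 1` by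
`-(m + i - 1)`, which is `m + (b + 2 - i) - 1` modulo `a` because `2m + b = a`.
-/

theorem frobenius_exponent_modEq {q a t c m b : ℤ} (i : ℤ) (hat : a * t = q ^ 2 - 1)
    (hc : q + 1 = a * c) (hmb : 2 * m + b = a) :
    q * ((m + i - 1) * t - q - 1) ≡ (m + (b + 2 - i) - 1) * t - q - 1 [ZMOD q ^ 2 - 1] :=
  Int.modEq_iff_dvd.2 ⟨2 - (m + i - 1) * c, by
    linear_combination t * hmb + (1 - (m + i - 1) * c) * hat - (m + i - 1) * t * hc⟩

theorem pow_zpow_mul_eq_of_modEq {G : Type*} [Group G] {x : G} {q : ℕ} {e e' : ℤ}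
    (h : q * e ≡ e' [ZMOD orderOf x]) (l : ℤ) : (x ^ (e * l)) ^ q = x ^ (e' * l) := by
  rw [← zpow_natCast, ← zpow_mul, zpow_eq_zpow_iff_modEq]
  convert h.mul_right l using 1
  ring

theorem stmt19_general (q a t b m : ℕ) (hq : IsPrimePow q) (ha : a ∣ q + 1)
    (ht : t = (q ^ 2 - 1) / a) (hba : b + 4 ≤ a) (hab : (a + b) % 2 = 0)
    (hm : m = (a - b) / 2)
    (F : Type) [Field F]
    (ξ : Fˣ) (hξ : orderOf ξ = q ^ 2 - 1) :
    ∀ i : ℕ, 1 ≤ i → i ≤ b + 1 → ∀ l : Fin (b + 1),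
      (ξ ^ ((((m : ℤ) + i - 1) * t - q - 1) * (l : ℕ))) ^ q =
        ξ ^ ((((m : ℤ) + ((b : ℤ) + 2 - i) - 1) * t - q - 1) * (l : ℕ)) := by
  intro i _ _ l
  have hq2 : ((q ^ 2 - 1 : ℕ) : ℤ) = (q : ℤ) ^ 2 - 1 := by
    push_cast [Nat.one_le_pow _ _ hq.pos]
    ring
  have hat : a * t = q ^ 2 - 1 := by
    rw [ht, Nat.mul_div_cancel' (ha.trans (Dvd.intro _ (Nat.sq_sub_sq q 1).symm))]
  have hmb : 2 * (m : ℤ) + b = a := by omega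
  obtain ⟨c, hc⟩ := ha
  have hcZ : (q : ℤ) + 1 = a * c := by exact_mod_cast hc
  refine pow_zpow_mul_eq_of_modEq ?_ _
  rw [hξ, hq2]
  refine frobenius_exponent_modEq i ?_ hcZ hmb
  rw [← hq2]
  exact_mod_cast hat

theorem stmt19 (q a t b m : ℕ) (hq : IsPrimePow q) (ha : a ∣ q + 1)
    (ht : t = (q ^ 2 - 1) / a) (hba : b + 4 ≤ a) (hab : (a + b) % 2 = 0)
    (hm : m = (a - b) / 2)
    (F : Type) [Field F] [Fintype F] (hF : Fintype.card F = q ^ 2)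
    (ξ : Fˣ) (hξ : orderOf ξ = q ^ 2 - 1) :
    ∀ i : ℕ, 1 ≤ i → i ≤ b + 1 → ∀ l : Fin (b + 1),
      (ξ ^ ((((m : ℤ) + i - 1) * t - q - 1) * (l : ℕ))) ^ q =
        ξ ^ ((((m : ℤ) + ((b : ℤ) + 2 - i) - 1) * t - q - 1) * (l : ℕ)) :=
  stmt19_general q a t b m hq ha ht hba hab hm F ξ hξ
end
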